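/- arXiv:1108.1473 — 6 statements merged into one kernel-verified Lean document; each statement's English description precedes it below -/
import Mathlib

section
/- An n×n superboolean matrix A is nonsingular (i.e., its permanent equals 1) if and only if there exist permutations of rows and of columns (applied independently) bringing A to a lower-triangular form in which all diagonal entries are 1 and all entries strictly above the diagonal are 0. -/
/-!
In `SB` a product of entries is `0` as soon as one factor is `0` and is `1` only when all factors
are `1`, while a sum is `1` only when exactly one summand is `1` and the others are `0`. Hence
`per A = 1` means that exactly one permutation `π` runs through nonzero entries of `A`, and all of
them equal `1`.

A triangular form makes the diagonal the only such permutation, because a permutation `g` of a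
finite chain with `k ≤ g k` for all `k` is the identity. Conversely, after permuting the rows so that
`π = 1`, some column has its only nonzero entry on the diagonal: otherwise an off-diagonal nonzero
entry chosen in every column defines a map without fixed points, and rotating along its periodic
points gives a second permutation through nonzero entries. Moving that column (and its row) last
and recursing on the complementary minor produces the triangular form.
-/

open scoped Classical

/-- The superboolean semiring `SB = {0, 1, 1^ν}`. -/
def SB := Fin 3

instance : DecidableEq SB := inferInstanceAs (DecidableEq (Fin 3))
instance : Fintype SB := inferInstanceAs (Fintype (Fin 3))

def SB.zero : SB := (0 : Fin 3)
def SB.one : SB := (1 : Fin 3)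
/-- The ghost element `1^ν`. -/
def SB.nu : SB := (2 : Fin 3)

def SB.val (a : SB) : ℕ := Fin.val a

instance : Zero SB := ⟨SB.zero⟩
instance : One SB := ⟨SB.one⟩

def SB.add (a b : SB) : SB := (⟨min (a.val + b.val) 2, by omega⟩ : Fin 3)
def SB.mul (a b : SB) : SB := (⟨min (a.val * b.val) 2, by omega⟩ : Fin 3)

instance : Add SB := ⟨SB.add⟩
instance : Mul SB := ⟨SB.mul⟩

instance : AddCommMonoid SB where
  add := (· + ·)
  add_assoc := by decide
  zero_add := by decide
  add_zero := by decide
  add_comm := by decide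
  nsmul := nsmulRec

instance : CommMonoid SB where
  mul := (· * ·)
  mul_assoc := by decide
  one_mul := by decide
  mul_one := by decide
  mul_comm := by decide
  npow := npowRec

/-- The permanent of a square superboolean matrix. -/
def sbPer {n : ℕ} (A : Matrix (Fin n) (Fin n) SB) : SB :=
  ∑ π : Equiv.Perm (Fin n), ∏ i, A (π i) i

/-- A square superboolean matrix is nonsingular when its permanent is `1`. -/
def Nonsingular {n : ℕ} (A : Matrix (Fin n) (Fin n) SB) : Prop := sbPer A = SB.one

/-- Membership in the ghost ideal `{0, 1^ν}`. -/
def SB.IsGhost (a : SB) : Prop := a = SB.zero ∨ a = SB.nu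

/-- A family of superboolean vectors is dependent if some nontrivial boolean
combination of them lies entirely in the ghost ideal. -/
def SBDep {κ ι : Type*} [Fintype κ] (v : κ → ι → SB) : Prop :=
  ∃ α : κ → SB, (∀ k, α k = SB.zero ∨ α k = SB.one) ∧ (∃ k, α k ≠ SB.zero) ∧
    ∀ j : ι, SB.IsGhost (∑ k, α k * v k j)

/-- Independence of a family of superboolean vectors. -/
def SBIndep {κ ι : Type*} [Fintype κ] (v : κ → ι → SB) : Prop := ¬ SBDep v

/-- A matrix is boolean if none of its entries is the ghost `1^ν`. -/
def IsBooleanMat {ι κ : Type*} (A : Matrix ι κ SB) : Prop := ∀ i j, A i j ≠ SB.nu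

namespace SB

lemma zero_def : (0 : SB) = SB.zero := rfl

lemma one_def : (1 : SB) = SB.one := rfl

lemma add_eq_zero_iff : ∀ a b : SB, a + b = SB.zero ↔ a = SB.zero ∧ b = SB.zero := by decide

lemma add_eq_one_iff : ∀ a b : SB,
    a + b = SB.one ↔ a = SB.one ∧ b = SB.zero ∨ a = SB.zero ∧ b = SB.one := by decide

lemma mul_eq_zero_iff : ∀ a b : SB, a * b = SB.zero ↔ a = SB.zero ∨ b = SB.zero := by decide

lemma mul_eq_one_iff : ∀ a b : SB, a * b = SB.one ↔ a = SB.one ∧ b = SB.one := by decide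

variable {α : Type*} (s : Finset α) (f : α → SB)

lemma sum_eq_zero_iff : ∑ x ∈ s, f x = SB.zero ↔ ∀ x ∈ s, f x = SB.zero := by
  induction s using Finset.induction_on with
  | empty => simp [zero_def]
  | insert a s ha ih => rw [Finset.sum_insert ha, add_eq_zero_iff, ih, Finset.forall_mem_insert]

lemma sum_eq_one_iff :
    ∑ x ∈ s, f x = SB.one ↔ ∃ a ∈ s, f a = SB.one ∧ ∀ b ∈ s, b ≠ a → f b = SB.zero := by
  induction s using Finset.induction_on with
  | empty => simp [zero_def]; decide
  | insert a s ha ih =>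
    rw [Finset.sum_insert ha, add_eq_one_iff, ih, sum_eq_zero_iff, Finset.exists_mem_insert]
    simp only [Finset.forall_mem_insert]
    grind

lemma prod_eq_one_iff : ∏ x ∈ s, f x = SB.one ↔ ∀ x ∈ s, f x = SB.one := by
  induction s using Finset.induction_on with
  | empty => simp [one_def]
  | insert a s ha ih => rw [Finset.prod_insert ha, mul_eq_one_iff, ih, Finset.forall_mem_insert]

lemma prod_eq_zero_iff : ∏ x ∈ s, f x = SB.zero ↔ ∃ x ∈ s, f x = SB.zero := by
  induction s using Finset.induction_on with
  | empty => simp [one_def]; decide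
  | insert a s ha ih => rw [Finset.prod_insert ha, mul_eq_zero_iff, ih, Finset.exists_mem_insert]

end SB

lemma sbPer_eq_one_iff {n : ℕ} (A : Matrix (Fin n) (Fin n) SB) :
    sbPer A = SB.one ↔ ∃ π : Equiv.Perm (Fin n), (∀ i, A (π i) i = SB.one) ∧
      ∀ ρ : Equiv.Perm (Fin n), (∀ i, A (ρ i) i ≠ SB.zero) → ρ = π := by
  simp only [sbPer, SB.sum_eq_one_iff, SB.prod_eq_one_iff, SB.prod_eq_zero_iff, Finset.mem_univ,
    true_and, forall_const]
  refine exists_congr fun π => and_congr_right fun _ => forall_congr' fun ρ => ?_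
  rw [not_imp_comm, not_exists]

theorem Equiv.Perm.eq_one_of_forall_le_apply {α : Type*} [PartialOrder α] [Finite α]
    {g : Equiv.Perm α} (h : ∀ x, x ≤ g x) : g = 1 := by
  obtain ⟨m, hm, hgm⟩ := (isOfFinOrder_of_finite g).exists_pow_eq_one
  have hle : ∀ j x, x ≤ (g ^ j) x := by
    intro j
    induction j with
    | zero => simp
    | succ j ih => intro x; rw [pow_succ', Perm.mul_apply]; exact (ih x).trans (h _)
  ext x
  refine le_antisymm ?_ (h x)
  calc g x ≤ (g ^ (m - 1)) (g x) := hle _ _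
    _ = (g ^ m) x := by rw [← Perm.mul_apply, ← pow_succ, Nat.sub_add_cancel hm]
    _ = x := by rw [hgm, Perm.one_apply]

theorem Function.periodicPts_nonempty {α : Type*} [Finite α] [Nonempty α] (f : α → α) :
    (periodicPts f).Nonempty := by
  obtain ⟨m, n, hmn, heq⟩ := Finite.exists_ne_map_eq_of_infinite (f^[·] (Classical.arbitrary α))
  wlog hlt : m < n generalizing m n
  · exact this n m hmn.symm heq.symm (by omega)
  refine ⟨_, mk_mem_periodicPts (Nat.sub_pos_of_lt hlt) (x := f^[m] (Classical.arbitrary α)) ?_⟩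
  rw [IsPeriodicPt, IsFixedPt, ← iterate_add_apply, Nat.sub_add_cancel hlt.le, heq]

theorem Function.exists_perm_ne_one_of_forall_apply_ne {α : Type*} [Finite α] [Nonempty α]
    (f : α → α) (hf : ∀ x, f x ≠ x) : ∃ ρ : Equiv.Perm α, ρ ≠ 1 ∧ ∀ x, ρ x = x ∨ ρ x = f x := by
  set ρ := Equiv.Perm.ofSubtype ((bijOn_periodicPts f).equiv f)
  have hρ : ∀ x ∈ periodicPts f, ρ x = f x := fun x hx => Equiv.Perm.ofSubtype_apply_of_mem _ hx
  obtain ⟨x, hx⟩ := periodicPts_nonempty f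
  refine ⟨ρ, fun h => hf x (by rw [← hρ x hx, h, Equiv.Perm.one_apply]), fun y => ?_⟩
  by_cases hy : y ∈ periodicPts f
  · exact Or.inr (hρ y hy)
  · exact Or.inl (Equiv.Perm.ofSubtype_apply_of_not_mem _ hy)

namespace Matrix

variable {α : Type*} [Zero α]

theorem exists_col_eq_zero_of_unique_perm {ι : Type*} [Finite ι] [Nonempty ι] {M : Matrix ι ι α}
    (hdiag : ∀ i, M i i ≠ 0) (huniq : ∀ ρ : Equiv.Perm ι, (∀ j, M (ρ j) j ≠ 0) → ρ = 1) :
    ∃ j, ∀ i, i ≠ j → M i j = 0 := by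
  by_contra! h
  choose f hf using h
  obtain ⟨ρ, hρ1, hρ⟩ := Function.exists_perm_ne_one_of_forall_apply_ne f fun j => (hf j).1
  refine hρ1 (huniq ρ fun j => ?_)
  rcases hρ j with h | h <;> rw [h]
  exacts [hdiag j, (hf j).2]

theorem exists_lowerTriangular_reindex_of_unique_perm {ι : Type*} [Fintype ι] {n : ℕ}
    (hn : Fintype.card ι = n) {M : Matrix ι ι α} (hdiag : ∀ i, M i i ≠ 0)
    (huniq : ∀ ρ : Equiv.Perm ι, (∀ j, M (ρ j) j ≠ 0) → ρ = 1) :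
    ∃ e : Fin n ≃ ι, ∀ i j, i < j → M (e i) (e j) = 0 := by
  induction n generalizing ι with
  | zero => exact ⟨(Fintype.equivFinOfCardEq hn).symm, fun i => i.elim0⟩
  | succ n ih =>
    have : Nonempty ι := Fintype.card_pos_iff.1 (hn ▸ n.succ_pos)
    obtain ⟨j₀, hj₀⟩ := exists_col_eq_zero_of_unique_perm hdiag huniq
    have huniq' : ∀ ρ : Equiv.Perm {x // x ≠ j₀}, (∀ j, M (ρ j) j ≠ 0) → ρ = 1 := by
      intro ρ hρ
      refine Equiv.Perm.ofSubtype_injective ((huniq _ fun j => ?_).trans (map_one _).symm)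
      by_cases hj : j = j₀
      · rw [Equiv.Perm.ofSubtype_apply_of_not_mem (p := (· ≠ j₀)) _ (not_not.2 hj)]
        exact hdiag j
      · rw [Equiv.Perm.ofSubtype_apply_of_mem (p := (· ≠ j₀)) _ hj]
        exact hρ ⟨j, hj⟩
    obtain ⟨e, he⟩ := ih (ι := {x // x ≠ j₀}) (M := M.submatrix (↑) (↑))
      (by simp [Fintype.card_subtype_compl, hn]) (fun i => hdiag i) huniq'
    refine ⟨finSuccEquivLast.trans (e.optionCongr.trans (Equiv.optionSubtypeNe j₀)), ?_⟩
    intro i j hij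
    induction j using Fin.lastCases with
    | last =>
      obtain ⟨i, rfl⟩ := Fin.exists_castSucc_eq.2 hij.ne
      simpa [finSuccEquivLast_castSucc] using hj₀ _ (e i).2
    | cast j =>
      induction i using Fin.lastCases with
      | last => exact absurd hij (not_lt.2 (Fin.le_last _))
      | cast i =>
        simpa [finSuccEquivLast_castSucc] using he i j (Fin.castSucc_lt_castSucc_iff.1 hij)

theorem eq_of_forall_apply_ne_zero_of_lowerTriangular {β ι κ : Type*} [LinearOrder β] [Finite β]
    {M : Matrix ι κ α} {σ : β ≃ ι} {τ : β ≃ κ} (hM : ∀ i j, i < j → M (σ i) (τ j) = 0)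
    {ρ : κ ≃ ι} (hρ : ∀ j, M (ρ j) j ≠ 0) : ρ = τ.symm.trans σ := by
  have hg : τ.trans (ρ.trans σ.symm) = 1 := Equiv.Perm.eq_one_of_forall_le_apply fun k =>
    not_lt.1 fun hlt => hρ (τ k) (by simpa using hM _ k hlt)
  ext j
  simpa using congrArg (fun g : Equiv.Perm β => σ (g (τ.symm j))) hg

end Matrix

/-- An `n × n` superboolean matrix is nonsingular iff independently permuting rows
and columns brings it to lower-triangular form with `1`s on the diagonal and `0`s
strictly above the diagonal. -/
theorem nonsingular_iff_triangular {n : ℕ} (A : Matrix (Fin n) (Fin n) SB) :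
    Nonsingular A ↔ ∃ σ τ : Equiv.Perm (Fin n),
      (∀ i : Fin n, A (σ i) (τ i) = SB.one) ∧
      (∀ i j : Fin n, i < j → A (σ i) (τ j) = SB.zero) := by
  rw [Nonsingular, sbPer_eq_one_iff]
  constructor
  · rintro ⟨π, hπ, huniq⟩
    obtain ⟨e, he⟩ := Matrix.exists_lowerTriangular_reindex_of_unique_perm (Fintype.card_fin n)
      (M := A.submatrix π id) (fun i => (hπ i).trans_ne (by decide))
      fun ρ hρ => mul_eq_left.1 (huniq (π * ρ) hρ)
    exact ⟨e.trans π, e, fun i => hπ (e i), he⟩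
  · rintro ⟨σ, τ, hd, hu⟩
    exact ⟨τ.symm.trans σ, fun j => by simpa using hd (τ.symm j),
      fun ρ hρ => Matrix.eq_of_forall_apply_ne_zero_of_lowerTriangular hu hρ⟩
end

section
/- Let L be a finite lattice with structure matrix A defined by A(i,j) = 1 if ℓ_i ≤ ℓ_j and 0 otherwise, and let A^c be its entrywise complement. Then any strict chain B < ℓ_1 < ℓ_2 < ··· < ℓ_k in L (where B is the bottom element) gives a set of rows {ℓ_1, …, ℓ_k} of A^c that are independent over the superboolean semiring; a witness is given by the columns indexed by {B, ℓ_1, …, ℓ_{k-1}}. -/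
open scoped Classical

/-- The complemented structure matrix of a finite (pre)ordered set `L`:
entry `(x, y)` is `1` iff `x ≰ y`, and `0` iff `x ≤ y`. -/
noncomputable def Ac (L : Type*) [Preorder L] : Matrix L L SB :=
  fun x y => if x ≤ y then SB.zero else SB.one

/-!
Take as witness columns `⊥, ℓ 0, …, ℓ (k-2)`. Since `ℓ i ≤ ℓ (j-1)` exactly when `i < j`, the
witness submatrix of `A^c` is zero above the diagonal and one on and below it. Such a matrix has
permanent `1`, as only the identity permutation avoids the zero triangle. The rows are
independent for the same triangular reason: in a nontrivial boolean combination, the column of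
the largest row used sees exactly one nonzero term, so that coordinate is `1`, not ghost.
-/

open Finset

instance : CommMonoidWithZero SB :=
  { (inferInstance : CommMonoid SB), (inferInstance : Zero SB) with
    zero_mul := by decide
    mul_zero := by decide }

theorem Equiv.Perm.eq_one_of_forall_le {α : Type*} [Finite α] [LinearOrder α] {σ : Perm α}
    (h : ∀ i, i ≤ σ i) : σ = 1 := by
  by_contra hσ
  have hmoved : {i | σ i ≠ i}.Nonempty := by
    by_contra! hnone
    exact hσ (Equiv.ext fun i => by simpa using Set.eq_empty_iff_forall_notMem.mp hnone i)
  obtain ⟨m, hm, hmax⟩ := Set.exists_max_image _ id (Set.toFinite _) hmoved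
  have hlt : m < σ m := (h m).lt_of_ne' hm
  have hfix : σ (σ m) = σ m := by
    by_contra hne
    exact (hmax _ hne).not_gt hlt
  exact hm (σ.injective hfix)

theorem sbPer_of_lowerTriangular {n : ℕ} (A : Matrix (Fin n) (Fin n) SB)
    (hupper : ∀ i j, i < j → A i j = 0) : sbPer A = ∏ i, A i i := by
  rw [sbPer, sum_eq_single 1]
  · simp
  · intro σ _ hσ
    obtain ⟨i, hi⟩ : ∃ i, σ i < i := by
      by_contra! hle
      exact hσ (Equiv.Perm.eq_one_of_forall_le hle)
    exact prod_eq_zero (mem_univ i) (hupper _ _ hi)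
  · simp

theorem nonsingular_of_triangular {n : ℕ} (A : Matrix (Fin n) (Fin n) SB)
    (hdiag : ∀ i, A i i = 1) (hupper : ∀ i j, i < j → A i j = 0) : Nonsingular A := by
  rw [Nonsingular, sbPer_of_lowerTriangular A hupper, prod_eq_one fun i _ => hdiag i]
  rfl

theorem sbIndep_of_triangular_columns {κ ι : Type*} [Fintype κ] [LinearOrder κ] (v : κ → ι → SB)
    (c : κ → ι) (hdiag : ∀ i, v i (c i) = 1) (hupper : ∀ i j, i < j → v i (c j) = 0) :
    SBIndep v := by
  rintro ⟨α, hbool, hne, hghost⟩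
  obtain ⟨m, hm, hmax⟩ := Set.exists_max_image {i | α i ≠ SB.zero} id (Set.toFinite _) hne
  have hαm : α m = 1 := (hbool m).resolve_left hm
  have hcol : ∑ b, α b * v b (c m) = 1 := by
    rw [sum_eq_single m]
    · rw [hαm, hdiag, mul_one]
    · intro b _ hb
      rcases hb.lt_or_gt with hlt | hgt
      · rw [hupper b m hlt, mul_zero]
      · have hαb : α b = 0 := by
          by_contra hb0
          exact (hmax b hb0).not_gt hgt
        rw [hαb, zero_mul]
    · simp
  have hcol_ghost := hghost (c m)
  rw [hcol] at hcol_ghost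
  rcases hcol_ghost with h | h <;> exact absurd h (by decide)

theorem Ac_of_le {L : Type*} [Preorder L] {x y : L} (h : x ≤ y) : Ac L x y = 0 := if_pos h

theorem Ac_of_not_le {L : Type*} [Preorder L] {x y : L} (h : ¬x ≤ y) : Ac L x y = 1 := if_neg h

def chainColumn {L : Type*} [LE L] [OrderBot L] {k : ℕ} (ℓ : Fin k → L) (j : Fin k) : L :=
  if h : (j : ℕ) = 0 then ⊥ else ℓ ⟨(j : ℕ) - 1, by omega⟩

theorem le_chainColumn_iff {L : Type*} [Preorder L] [OrderBot L] {k : ℕ} {ℓ : Fin k → L}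
    (hmono : StrictMono ℓ) (hbot : ∀ i, ⊥ < ℓ i) (i j : Fin k) :
    ℓ i ≤ chainColumn ℓ j ↔ i < j := by
  unfold chainColumn
  split_ifs with hj
  · exact iff_of_false (hbot i).not_ge (by rw [Fin.lt_def]; omega)
  · rw [hmono.le_iff_le, Fin.le_def, Fin.lt_def]
    change (i : ℕ) ≤ (j : ℕ) - 1 ↔ _
    omega

/-- A strict chain `⊥ < ℓ 0 < ℓ 1 < ⋯` in a finite lattice gives independent rows of
the complemented structure matrix, with witness columns `⊥, ℓ 0, …, ℓ (k-2)`. -/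
theorem chain_rows_indep {L : Type*} [Lattice L] [OrderBot L]
    {k : ℕ} (ℓ : Fin k → L) (hmono : StrictMono ℓ) (hbot : ∀ i, ⊥ < ℓ i) :
    SBIndep (fun i (y : L) => Ac L (ℓ i) y) ∧
    Nonsingular (fun i j : Fin k =>
      Ac L (ℓ i) (if h : (j : ℕ) = 0 then ⊥ else ℓ ⟨(j : ℕ) - 1, by have := j.isLt; omega⟩)) := by
  have hcol := le_chainColumn_iff hmono hbot
  have hdiag : ∀ i, Ac L (ℓ i) (chainColumn ℓ i) = 1 :=
    fun i => Ac_of_not_le ((hcol i i).not.mpr (lt_irrefl i))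
  have hupper : ∀ i j, i < j → Ac L (ℓ i) (chainColumn ℓ j) = 0 :=
    fun i j hij => Ac_of_le ((hcol i j).mpr hij)
  exact ⟨sbIndep_of_triangular_columns _ (chainColumn ℓ) hdiag hupper,
    nonsingular_of_triangular _ hdiag hupper⟩
end

section
/- Let L be a finite meet-closed lattice and A^c its complemented structure matrix (A^c(i,j) = 1 iff ℓ_i ≰ ℓ_j). If W = {ℓ_1,…,ℓ_k} ⊆ L has independent rows in A^c with a k×k nonsingular witness submatrix on columns U = {m_1,…,m_k} in lower-triangular form, then setting m̃_j = m_j ∧ m_{j+1} ∧ ··· ∧ m_k yields a strict chain m̃_1 < m̃_2 < ··· < m̃_k in L. -/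
open scoped Classical

/-- A lower-triangular nonsingular witness on columns `m 0, …, m (k-1)` for independent
rows `ℓ 0, …, ℓ (k-1)` of the complemented structure matrix yields the strict chain
`m̃ 0 < m̃ 1 < ⋯ < m̃ (k-1)`, where `m̃ j = m j ∧ m (j+1) ∧ ⋯ ∧ m (k-1)`. -/
theorem witness_gives_chain {L : Type*} [Fintype L] [Lattice L]
    {k : ℕ} (ℓ m : Fin k → L)
    (hindep : SBIndep (fun i (y : L) => Ac L (ℓ i) y))
    (hdiag : ∀ i : Fin k, Ac L (ℓ i) (m i) = SB.one)
    (habove : ∀ i j : Fin k, i < j → Ac L (ℓ i) (m j) = SB.zero) :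
    StrictMono (fun j : Fin k =>
      (Finset.Ici j).inf' ⟨j, Finset.mem_Ici.mpr le_rfl⟩ m) := by
  have hAc0 : ∀ {x y : L}, Ac L x y = SB.zero → x ≤ y := by
    intro x y h
    unfold Ac at h
    by_cases hxy : x ≤ y
    · exact hxy
    · simp [hxy] at h; exact absurd h (by decide)
  have hAc1 : ∀ {x y : L}, Ac L x y = SB.one → ¬ x ≤ y := by
    intro x y h hxy
    unfold Ac at h
    simp [hxy] at h; exact absurd h (by decide)
  intro a b hab
  have hle : (Finset.Ici a).inf' ⟨a, Finset.mem_Ici.mpr le_rfl⟩ m ≤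
      (Finset.Ici b).inf' ⟨b, Finset.mem_Ici.mpr le_rfl⟩ m := by
    apply Finset.le_inf'
    intro i hi
    exact Finset.inf'_le m (Finset.mem_Ici.mpr (le_trans hab.le (Finset.mem_Ici.mp hi)))
  refine lt_of_le_of_ne hle ?_
  intro heq
  have h1 : ℓ a ≤ (Finset.Ici b).inf' ⟨b, Finset.mem_Ici.mpr le_rfl⟩ m := by
    apply Finset.le_inf'
    intro i hi
    exact hAc0 (habove a i (lt_of_lt_of_le hab (Finset.mem_Ici.mp hi)))
  simp only [] at heq
  rw [← heq] at h1
  have h2 : ℓ a ≤ m a :=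
    le_trans h1 (Finset.inf'_le m (Finset.mem_Ici.mpr le_rfl))
  exact hAc1 (hdiag a) h2
end

section
/- For a simple matroid M with lattice of flats L = Lat(M), the rank of M equals the height of L, which equals the maximal number of superboolean-independent rows of the complemented structure matrix of L. -/
open scoped Classical

/-- A matroid in the sense of Whitney: a nonempty hereditary collection of
independent sets satisfying the exchange axiom. -/
structure PaperMatroid (E : Type*) [Fintype E] where
  Indep : Set E → Prop
  exists_indep : ∃ X, Indep X
  indep_subset : ∀ ⦃X Y : Set E⦄, X ⊆ Y → Indep Y → Indep X
  exchange : ∀ ⦃X Y : Set E⦄, Indep X → Indep Y → Y.ncard = X.ncard + 1 →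
    ∃ y ∈ Y \ X, Indep (insert y X)

namespace PaperMatroid

variable {E : Type*} [Fintype E] (M : PaperMatroid E)

/-- A circuit: a minimal dependent set. -/
def Circuit (C : Set E) : Prop := ¬ M.Indep C ∧ ∀ D ⊂ C, M.Indep D

/-- The closure of `X`: `X` together with all `y` for which some circuit
contained in `X ∪ {y}` contains `y`. -/
def cl (X : Set E) : Set E :=
  X ∪ {y | y ∉ X ∧ ∃ C, M.Circuit C ∧ C ⊆ insert y X ∧ y ∈ C}

/-- A flat (closed set). -/
def Flat (F : Set E) : Prop := M.cl F = F

/-- A simple matroid: every subset of size at most `2` is independent. -/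
def Simple : Prop := ∀ X : Set E, X.ncard ≤ 2 → M.Indep X

/-- A basis: a maximal independent set. -/
def Basis (B : Set E) : Prop :=
  M.Indep B ∧ ∀ X : Set E, M.Indep X → B ⊆ X → X = B

/-- The lattice of flats of `M`, ordered by inclusion. -/
abbrev Flats := {F : Set E // M.Flat F}

end PaperMatroid

/-- The complemented structure matrix of the lattice of flats of `M`:
entry `(F, G)` is `1` iff `F ⊄ G`, and `0` iff `F ⊆ G`. -/
noncomputable def AcM {E : Type*} [Fintype E] (M : PaperMatroid E) :
    Matrix M.Flats M.Flats SB :=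
  fun F G => if F.1 ⊆ G.1 then SB.zero else SB.one

/-!
Along a chain of flats the rank increases strictly, so no chain is longer than the rank `r`;
conversely the closures of the initial segments of an enumerated basis form a chain of length `r`.

A boolean combination of rows of `A^c` with support `S` is non-ghost in column `y` exactly when a
single row of `S` fails to lie below `y`. Hence the rows `x₁, …, x_k` of a chain
`x₀ < ⋯ < x_k` are independent (test a support against the chain element just below its largest
row). Conversely, if rows below `h` are independent, some flat `y` lies above all of them but one,
`x`; the others lie below `y ⊓ h`, which is strictly below `h` because `x ≤ h`, and induction
yields a chain of flats as long as the family of rows.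
-/

open Finset

lemma Fin.strictMono_snoc {α : Type*} [Preorder α] {n : ℕ} {c : Fin (n + 1) → α} {x : α}
    (hc : StrictMono c) (hx : c (Fin.last n) < x) :
    StrictMono (Fin.snoc c x : Fin (n + 2) → α) := by
  rw [Fin.strictMono_iff_lt_succ]
  intro i
  induction i using Fin.lastCases with
  | last => simpa using hx
  | cast j =>
    rw [Fin.succ_castSucc, Fin.snoc_castSucc, Fin.snoc_castSucc]
    exact hc j.castSucc_lt_succ

lemma Fin.natCast_le_of_strictMono {n : ℕ} {f : Fin (n + 1) → ℕ∞} (hf : StrictMono f)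
    (i : Fin (n + 1)) : (i : ℕ∞) ≤ f i := by
  induction i using Fin.induction with
  | zero => simp
  | succ i ih =>
    calc ((i.succ : ℕ) : ℕ∞) = (i.castSucc : ℕ) + 1 := by simp
      _ ≤ f i.castSucc + 1 := by gcongr
      _ ≤ f i.succ := Order.add_one_le_of_lt (hf i.castSucc_lt_succ)

def SB.ofCount : ℕ →+ SB where
  toFun n := (⟨min n 2, by omega⟩ : Fin 3)
  map_zero' := rfl
  map_add' a b := by
    change (⟨min (a + b) 2, _⟩ : Fin 3) = ⟨min (min a 2 + min b 2) 2, _⟩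
    congr 1
    omega

lemma SB.isGhost_ofCount_iff {n : ℕ} : (SB.ofCount n).IsGhost ↔ n ≠ 1 := by
  unfold SB.IsGhost
  rcases n with _ | _ | n
  · decide
  · decide
  · have : SB.ofCount (n + 2) = SB.nu := Fin.ext (show min (n + 2) 2 = 2 by omega)
    simp [this]

lemma SB.sum_boole {ι : Type*} (s : Finset ι) (p : ι → Prop) [DecidablePred p] :
    ∑ i ∈ s, (if p i then 1 else 0 : SB) = SB.ofCount #{i ∈ s | p i} := by
  rw [card_filter, map_sum]
  refine sum_congr rfl fun i _ => ?_
  split_ifs <;> rfl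

lemma SB.boole_mul_boole (p q : Prop) [Decidable p] [Decidable q] :
    (if p then 1 else 0 : SB) * (if q then 1 else 0) = if p ∧ q then 1 else 0 := by
  split_ifs <;> first | rfl | tauto

lemma sbIndep_boole_iff {κ ι : Type*} [Fintype κ] (R : κ → ι → Prop)
    [∀ k j, Decidable (R k j)] :
    SBIndep (fun k j => if R k j then (1 : SB) else 0) ↔
      ∀ S : Finset κ, S.Nonempty → ∃ j, #{k ∈ S | R k j} = 1 := by
  have combination (S : Finset κ) (j : ι) :
      ∑ k, (if k ∈ S then 1 else 0 : SB) * (if R k j then 1 else 0) =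
        SB.ofCount #{k ∈ S | R k j} := by
    simp_rw [SB.boole_mul_boole, SB.sum_boole]
    congr 2
    ext k
    simp
  constructor
  · intro hind S hS
    by_contra! hcard
    refine hind ⟨fun k => if k ∈ S then 1 else 0, fun k => ?_, ?_, fun j => ?_⟩
    · dsimp only
      split_ifs
      exacts [Or.inr rfl, Or.inl rfl]
    · obtain ⟨k, hk⟩ := hS
      exact ⟨k, by simp only [hk, if_true]; decide⟩
    · rw [combination, SB.isGhost_ofCount_iff]
      exact hcard j
  · rintro hsep ⟨α, hbool, ⟨k, hk⟩, hghost⟩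
    set S : Finset κ := {k | α k = SB.one}
    have hα : α = fun k => if k ∈ S then 1 else 0 := by
      funext k
      rcases hbool k with h | h <;>
        simp only [S, h, mem_filter, mem_univ, true_and, ↓reduceIte] <;> rfl
    obtain ⟨j, hj⟩ := hsep S ⟨k, by simpa [S] using (hbool k).resolve_left hk⟩
    have := hghost j
    rw [hα, combination, SB.isGhost_ofCount_iff] at this
    exact this hj

noncomputable def complStructureMatrix (α : Type*) [LE α] : Matrix α α SB :=
  fun x y => if x ≤ y then 0 else 1

lemma sbIndep_complStructureMatrix_iff {α κ : Type*} [LE α] [Fintype κ] (w : κ → α) :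
    SBIndep (fun k => complStructureMatrix α (w k)) ↔
      ∀ S : Finset κ, S.Nonempty → ∃ y, #{k ∈ S | ¬ w k ≤ y} = 1 := by
  have hrows :
      (fun k => complStructureMatrix α (w k)) = fun k y => if ¬ w k ≤ y then 1 else 0 := by
    funext k y
    exact (ite_not _ _ _).symm
  rw [hrows, sbIndep_boole_iff]

lemma sbIndep_complStructureMatrix_succ {α : Type*} [Preorder α] {k : ℕ}
    {c : Fin (k + 1) → α} (hc : StrictMono c) :
    SBIndep (fun i : Fin k => complStructureMatrix α (c i.succ)) := by
  rw [sbIndep_complStructureMatrix_iff]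
  intro S hS
  refine ⟨c (S.max' hS).castSucc, card_eq_one.2 ⟨S.max' hS, ?_⟩⟩
  ext i
  simp only [mem_filter, mem_singleton]
  constructor
  · rintro ⟨hi, hnle⟩
    by_contra hne
    have hlt : i < S.max' hS := lt_of_le_of_ne (S.le_max' i hi) hne
    exact hnle (hc.monotone (Fin.succ_le_castSucc_iff.2 hlt))
  · rintro rfl
    exact ⟨S.max'_mem hS, (hc (S.max' hS).castSucc_lt_succ).not_ge⟩

lemma SBIndep.exists_strictMono_of_complStructureMatrix {α κ : Type*} [SemilatticeInf α]
    [Fintype κ] {w : κ → α} (hw : SBIndep fun k => complStructureMatrix α (w k))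
    (S : Finset κ) (h : α) (hS : ∀ k ∈ S, w k ≤ h) :
    ∃ c : Fin (#S + 1) → α, StrictMono c ∧ c (Fin.last _) = h := by
  rw [sbIndep_complStructureMatrix_iff] at hw
  generalize hn : #S = n
  induction n generalizing S h with
  | zero => exact ⟨fun _ => h, Fin.strictMono_iff_lt_succ.2 Fin.elim0, rfl⟩
  | succ n ih =>
    obtain ⟨y, hy⟩ := hw S (card_pos.1 (by omega))
    obtain ⟨i, hi⟩ := card_eq_one.1 hy
    have hiS : i ∈ S ∧ ¬ w i ≤ y := mem_filter.1 (hi ▸ mem_singleton_self i)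
    have hle : ∀ k ∈ S.erase i, w k ≤ y ⊓ h := by
      intro k hk
      obtain ⟨hki, hkS⟩ := mem_erase.1 hk
      refine le_inf (not_not.1 fun hnle => hki ?_) (hS k hkS)
      exact mem_singleton.1 (hi ▸ mem_filter.2 ⟨hkS, hnle⟩)
    obtain ⟨c, hc, hlast⟩ :=
      ih (S.erase i) (y ⊓ h) hle (by rw [card_erase_of_mem hiS.1, hn]; rfl)
    refine ⟨Fin.snoc c h, Fin.strictMono_snoc hc ?_, Fin.snoc_last _ _⟩
    rw [hlast, inf_lt_right]
    exact fun hhy => hiS.2 ((hS i hiS.1).trans hhy)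

namespace Matroid

variable {α : Type*} {M : Matroid α} {F G I : Set α}

lemma IsFlat.inter (hF : M.IsFlat F) (hG : M.IsFlat G) : M.IsFlat (F ∩ G) := by
  rw [Set.inter_eq_iInter]
  exact IsFlat.iInter (by simp [hF, hG])

lemma IsFlat.eRk_lt_eRk [M.RankFinite] (hF : M.IsFlat F) (hFG : F ⊂ G)
    (hG : G ⊆ M.E := by aesop_mat) : M.eRk F < M.eRk G := by
  obtain ⟨e, heG, heF⟩ := Set.exists_of_ssubset hFG
  calc M.eRk F < M.eRk F + 1 :=
        (ENat.lt_add_one_iff (M.isRkFinite_set F).eRk_lt_top.ne).2 le_rfl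
    _ = M.eRk (insert e F) := (eRk_insert_eq_add_one ⟨hG heG, by rwa [hF.closure]⟩).symm
    _ ≤ M.eRk G := M.eRk_mono (Set.insert_subset heG hFG.subset)

lemma length_le_eRank_of_strictMono_isFlat [M.RankFinite] {n : ℕ} {c : Fin (n + 1) → Set α}
    (hc : StrictMono c) (hflat : ∀ i, M.IsFlat (c i)) : (n : ℕ∞) ≤ M.eRank := by
  have hrk : StrictMono fun i => M.eRk (c i) :=
    fun i j hij => (hflat i).eRk_lt_eRk (hc hij) (hflat j).subset_ground
  simpa using (Fin.natCast_le_of_strictMono hrk (Fin.last n)).trans (M.eRk_le_eRank _)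

lemma Indep.exists_strictMono_isFlat (hI : M.Indep I) :
    ∃ c : Fin (I.ncard + 1) → Set α,
      StrictMono c ∧ (∀ i, M.IsFlat (c i)) ∧ c (Fin.last _) = M.closure I := by
  generalize hn : I.ncard = n
  induction n generalizing I with
  | zero =>
    exact ⟨fun _ => M.closure I, Fin.strictMono_iff_lt_succ.2 Fin.elim0,
      fun _ => M.isFlat_closure I, rfl⟩
  | succ n ih =>
    obtain ⟨e, he⟩ := Set.nonempty_of_ncard_ne_zero (by omega : I.ncard ≠ 0)
    obtain ⟨c, hc, hflat, hlast⟩ := ih (hI.subset Set.sdiff_subset)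
      (by rw [Set.ncard_sdiff_singleton_of_mem he, hn]; rfl)
    refine ⟨Fin.snoc c (M.closure I), Fin.strictMono_snoc hc ?_, fun i => ?_, Fin.snoc_last _ _⟩
    · rw [hlast]
      exact hI.closure_ssubset_closure (Set.sdiff_singleton_ssubset.2 he)
    · induction i using Fin.lastCases with
      | last => simp
      | cast j => simpa using hflat j

lemma IsBase.isGreatest_ncard_indep [M.Finite] {B : Set α} (hB : M.IsBase B) :
    IsGreatest {n | ∃ I, M.Indep I ∧ I.ncard = n} B.ncard := by
  refine ⟨⟨B, hB.indep, rfl⟩, ?_⟩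
  rintro n ⟨I, hI, rfl⟩
  have := hI.encard_le_eRank
  rwa [← hB.encard_eq_eRank, ← hI.finite.cast_ncard_eq, ← hB.finite.cast_ncard_eq,
    Nat.cast_le] at this

end Matroid

namespace PaperMatroid

variable {E : Type*} [Fintype E] (M : PaperMatroid E)

lemma indep_empty : M.Indep ∅ :=
  let ⟨_, hX⟩ := M.exists_indep
  M.indep_subset (Set.empty_subset _) hX

lemma exists_insert_of_ncard_lt {I J : Set E} (hI : M.Indep I) (hJ : M.Indep J)
    (hIJ : I.ncard < J.ncard) : ∃ e ∈ J, e ∉ I ∧ M.Indep (insert e I) := by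
  obtain ⟨J', hJ'J, hcard⟩ := Set.exists_subset_card_eq (show I.ncard + 1 ≤ J.ncard by omega)
  obtain ⟨e, he, hins⟩ := M.exchange hI (M.indep_subset hJ'J hJ) hcard
  exact ⟨e, hJ'J he.1, he.2, hins⟩

def toMatroid : Matroid E :=
  (IndepMatroid.ofFinite Set.finite_univ M.Indep M.indep_empty
    (fun _ _ hJ hIJ => M.indep_subset hIJ hJ) (fun _ _ => M.exists_insert_of_ncard_lt)
    (fun _ _ => Set.subset_univ _)).matroid

instance : M.toMatroid.Finite := ⟨Set.finite_univ⟩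

@[simp] lemma toMatroid_ground : M.toMatroid.E = Set.univ := rfl

lemma toMatroid_indep {I : Set E} : M.toMatroid.Indep I ↔ M.Indep I := Iff.rfl

lemma toMatroid_isCircuit_iff {C : Set E} : M.toMatroid.IsCircuit C ↔ M.Circuit C := by
  simp [Matroid.isCircuit_iff_forall_ssubset, Matroid.dep_iff, toMatroid_indep, Circuit]

lemma cl_eq_closure (X : Set E) : M.cl X = M.toMatroid.closure X := by
  ext y
  by_cases hy : y ∈ X
  · simpa [cl, hy] using M.toMatroid.subset_closure X (Set.subset_univ _) hy
  · simp only [cl, Set.mem_union, hy, Set.mem_ofPred_eq, not_false_eq_true, true_and, false_or,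
      Matroid.mem_closure_iff_exists_isCircuit hy, toMatroid_isCircuit_iff]
    tauto

lemma flat_iff_isFlat {F : Set E} : M.Flat F ↔ M.toMatroid.IsFlat F := by
  rw [Matroid.isFlat_iff_closure_eq, Flat, cl_eq_closure]

instance : SemilatticeInf M.Flats :=
  Subtype.semilatticeInf fun _ _ hF hG =>
    M.flat_iff_isFlat.2 ((M.flat_iff_isFlat.1 hF).inter (M.flat_iff_isFlat.1 hG))

lemma exists_strictMono_flats {B : Set E} (hB : M.toMatroid.IsBase B) :
    ∃ c : Fin (B.ncard + 1) → M.Flats, StrictMono c :=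
  let ⟨c, hc, hflat, _⟩ := hB.indep.exists_strictMono_isFlat
  ⟨fun i => ⟨c i, M.flat_iff_isFlat.2 (hflat i)⟩, hc⟩

lemma le_ncard_of_strictMono_flats {B : Set E} (hB : M.toMatroid.IsBase B) {n : ℕ}
    {c : Fin (n + 1) → M.Flats} (hc : StrictMono c) : n ≤ B.ncard := by
  have := M.toMatroid.length_le_eRank_of_strictMono_isFlat (c := fun i => (c i).1) hc
    fun i => M.flat_iff_isFlat.1 (c i).2
  rwa [← hB.encard_eq_eRank, ← (Set.toFinite B).cast_ncard_eq, Nat.cast_le] at this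

end PaperMatroid

theorem rank_eq_height_eq_nook_general {E : Type*} [Fintype E] (M : PaperMatroid E) :
    ∃ r : ℕ,
      IsGreatest {n : ℕ | ∃ X : Set E, M.Indep X ∧ X.ncard = n} r ∧
      IsGreatest {n : ℕ | ∃ c : Fin (n + 1) → M.Flats, StrictMono c} r ∧
      IsGreatest {k : ℕ | ∃ w : Fin k → M.Flats, Function.Injective w ∧
        SBIndep (fun i (G : M.Flats) => AcM M (w i) G)} r := by
  obtain ⟨B, hB⟩ := M.toMatroid.exists_isBase
  obtain ⟨c, hc⟩ := M.exists_strictMono_flats hB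
  have hA : AcM M = complStructureMatrix M.Flats := rfl
  refine ⟨B.ncard, hB.isGreatest_ncard_indep,
    ⟨⟨c, hc⟩, fun n ⟨d, hd⟩ => M.le_ncard_of_strictMono_flats hB hd⟩, ⟨?_, ?_⟩⟩
  · exact ⟨fun i => c i.succ, hc.injective.comp (Fin.succ_injective _),
      hA ▸ sbIndep_complStructureMatrix_succ hc⟩
  · rintro k ⟨w, -, hw⟩
    rw [hA] at hw
    obtain ⟨d, hd, -⟩ := hw.exists_strictMono_of_complStructureMatrix univ
      ⟨Set.univ, M.flat_iff_isFlat.2 M.toMatroid.ground_isFlat⟩ fun _ _ => Set.subset_univ _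
    simpa using M.le_ncard_of_strictMono_flats hB hd

/-- For a simple matroid `M` with flat lattice `L`, the rank of `M`, the height of `L`,
and the maximal number of independent rows of the complemented structure matrix of `L`
all coincide. -/
theorem rank_eq_height_eq_nook {E : Type*} [Fintype E] (M : PaperMatroid E)
    (hs : M.Simple) :
    ∃ r : ℕ,
      IsGreatest {n : ℕ | ∃ X : Set E, M.Indep X ∧ X.ncard = n} r ∧
      IsGreatest {n : ℕ | ∃ c : Fin (n + 1) → M.Flats, StrictMono c} r ∧
      IsGreatest {k : ℕ | ∃ w : Fin k → M.Flats, Function.Injective w ∧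
        SBIndep (fun i (G : M.Flats) => AcM M (w i) G)} r :=
  rank_eq_height_eq_nook_general M
end

section
/- Let M = (E, H) be a simple matroid with flat lattice L. A subset W = {x_1,…,x_t} ⊆ E is a partial transversal of some partition Q_1,…,Q_k arising from a maximal chain of flats (Q_i = F_i \ F_{i-1}) if and only if the corresponding atoms {{x_1},…,{x_t}} index independent rows of the complemented structure matrix A^c of L over the superboolean semiring. -/
open scoped Classical

/-!
The rows are the 0/1 vectors `G ↦ [x a ∉ G]`, and over `SB` a sum of such rows is ghost at `G`
exactly when the number of summands not in `G` differs from `1`. So the rows are independent iff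
every nonempty set `S` of marked points is separated by a flat `G`: exactly one point of `S` lies
outside `G`.

Along a maximal chain whose blocks each contain at most one marked point, the flat just below the
highest block meeting `S` separates `S`. Conversely, if every such `S` is separated, a chain from
`∅` to a flat `B` is built by recursion on `B`: a flat `G` separating the marked points of `B`
leaves exactly one of them outside `B ∩ G`, so a chain from `∅` to `B ∩ G` followed by any
refinement of `B ∩ G ⊆ B` into covering steps is again transversal.
-/

open Relation Finset

namespace SB

lemma val_sum {κ : Type*} (s : Finset κ) (f : κ → SB) :
    (∑ k ∈ s, f k).val = min (∑ k ∈ s, (f k).val) 2 := by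
  induction s using Finset.cons_induction with
  | empty => rfl
  | cons a s _ ih =>
    rw [sum_cons, sum_cons]
    change min ((f a).val + (∑ k ∈ s, f k).val) 2 = _
    omega

lemma isGhost_iff_val_ne_one : ∀ a : SB, a.IsGhost ↔ a.val ≠ 1 := by
  unfold SB.IsGhost
  decide

lemma isGhost_sum_ite_iff {κ : Type*} (s : Finset κ) (p : κ → Prop) [DecidablePred p] :
    (∑ k ∈ s, if p k then SB.zero else SB.one).IsGhost ↔ #{k ∈ s | ¬ p k} ≠ 1 := by
  have hval : ∀ k, (if p k then SB.zero else SB.one).val = if ¬ p k then 1 else 0 := by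
    intro k; by_cases h : p k <;> simp [h] <;> rfl
  rw [isGhost_iff_val_ne_one, val_sum, card_filter]
  simp only [hval]
  omega

lemma mul_eq_ite {a : SB} (ha : a = SB.zero ∨ a = SB.one) (b : SB) :
    a * b = if a = SB.one then b else 0 := by
  rcases ha with rfl | rfl <;> revert b <;> decide

end SB

lemma sbDep_iff_exists_finset {κ ι : Type*} [Fintype κ] (v : κ → ι → SB) :
    SBDep v ↔ ∃ S : Finset κ, S.Nonempty ∧ ∀ j, (∑ k ∈ S, v k j).IsGhost := by
  constructor
  · rintro ⟨α, hα, ⟨k, hk⟩, hghost⟩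
    refine ⟨({k | α k = SB.one} : Finset κ), ⟨k, by simpa using (hα k).resolve_left hk⟩,
      fun j => ?_⟩
    simpa only [sum_filter, SB.mul_eq_ite (hα _)] using hghost j
  · rintro ⟨S, hS, hghost⟩
    let α k : SB := if k ∈ S then SB.one else SB.zero
    have hα : ∀ k, α k = SB.zero ∨ α k = SB.one := fun k => by
      by_cases h : k ∈ S <;> simp [α, h]
    have hαS : ∀ k, α k = SB.one ↔ k ∈ S := fun k => by
      by_cases h : k ∈ S <;> simp [α, h]; decide
    refine ⟨α, hα, hS.imp fun k hk hα0 => ?_, fun j => ?_⟩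
    · exact absurd (hα0 ▸ (hαS k).2 hk) (by decide)
    · simpa only [SB.mul_eq_ite (hα _), hαS, ← sum_filter, filter_mem_eq_inter, univ_inter]
        using hghost j

lemma sbIndep_ite_iff {κ ι : Type*} [Fintype κ] (p : κ → ι → Prop)
    [∀ k j, Decidable (p k j)] :
    SBIndep (fun k j => if p k j then SB.zero else SB.one) ↔
      ∀ S : Finset κ, S.Nonempty → ∃ j, #{k ∈ S | ¬ p k j} = 1 := by
  simp only [SBIndep, sbDep_iff_exists_finset, SB.isGhost_sum_ite_iff]
  push Not
  rfl

namespace PaperMatroid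

variable {E : Type*} [Fintype E] (M : PaperMatroid E)

lemma subset_cl (X : Set E) : X ⊆ M.cl X := Set.subset_union_left

lemma cl_mono {X Y : Set E} (h : X ⊆ Y) : M.cl X ⊆ M.cl Y := by
  rintro y (hy | ⟨-, C, hC, hCy, hyC⟩)
  · exact Or.inl (h hy)
  · by_cases hyY : y ∈ Y
    · exact Or.inl hyY
    · exact Or.inr ⟨hyY, C, hC, hCy.trans (Set.insert_subset_insert h), hyC⟩

lemma flat_univ : M.Flat Set.univ := (Set.subset_univ _).antisymm (M.subset_cl _)

lemma flat_empty (hs : M.Simple) : M.Flat ∅ := by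
  refine Set.Subset.antisymm ?_ (M.subset_cl _)
  rintro y (hy | ⟨-, C, hC, hCy, -⟩)
  · exact hy
  · refine absurd (hs C ?_) hC.1
    calc C.ncard ≤ ({y} : Set E).ncard := Set.ncard_le_ncard (by simpa using hCy)
      _ ≤ 2 := by simp

variable {M}

lemma Flat.inter {F G : Set E} (hF : M.Flat F) (hG : M.Flat G) : M.Flat (F ∩ G) := by
  refine Set.Subset.antisymm (fun y hy => ⟨?_, ?_⟩) (M.subset_cl _)
  · exact hF ▸ M.cl_mono Set.inter_subset_left hy
  · exact hG ▸ M.cl_mono Set.inter_subset_right hy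

end PaperMatroid

lemma Relation.reflTransGen_iff_exists_fin {α : Type*} {r : α → α → Prop} {a b : α} :
    ReflTransGen r a b ↔ ∃ (k : ℕ) (f : Fin (k + 1) → α),
      f 0 = a ∧ f (Fin.last k) = b ∧ ∀ i : Fin k, r (f i.castSucc) (f i.succ) := by
  constructor
  · intro h
    induction h with
    | refl => exact ⟨0, fun _ => a, rfl, rfl, Fin.elim0⟩
    | @tail _ c _ hcd ih =>
      obtain ⟨k, f, hf0, hfk, hf⟩ := ih
      refine ⟨k + 1, Fin.snoc f c, by simpa using hf0, by simp, Fin.lastCases ?_ fun i => ?_⟩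
      · simpa [hfk] using hcd
      · rw [Fin.succ_castSucc, Fin.snoc_castSucc, Fin.snoc_castSucc]
        exact hf i
  · rintro ⟨k, f, rfl, rfl, hf⟩
    induction k with
    | zero => rfl
    | succ k ih =>
      exact (ih (Fin.init f) fun i => by simpa [Fin.init] using hf i.castSucc).tail
        (by simpa [Fin.init] using hf (Fin.last k))

lemma reflTransGen_covBy_of_le {α : Type*} [PartialOrder α] [Finite α] {a b : α} (h : a ≤ b) :
    ReflTransGen (· ⋖ ·) a b := by
  have := Fintype.ofFinite α
  let := Fintype.toLocallyFiniteOrder (α := α)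
  exact le_iff_reflTransGen_covBy.1 h

section IntersectionClosed

variable {E ι : Type*} {P : Set E → Prop} (x : ι → E)

def TransversalCovBy (A B : {F // P F}) : Prop :=
  A ⋖ B ∧ (x ⁻¹' (B.1 \ A.1)).Subsingleton

lemma exists_transversal_chain_iff_reflTransGen (hempty : P ∅) (huniv : P Set.univ) :
    (∃ (k : ℕ) (F : Fin (k + 1) → Set E),
      (∀ i, P (F i)) ∧ StrictMono F ∧ F 0 = ∅ ∧ F (Fin.last k) = Set.univ ∧
      (∀ i : Fin k, ∀ G : Set E, P G → ¬ (F i.castSucc ⊂ G ∧ G ⊂ F i.succ)) ∧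
      (∀ a b : ι, ∀ i : Fin k,
        x a ∈ F i.succ \ F i.castSucc → x b ∈ F i.succ \ F i.castSucc → a = b)) ↔
    ReflTransGen (TransversalCovBy x) ⟨∅, hempty⟩ ⟨Set.univ, huniv⟩ := by
  rw [Relation.reflTransGen_iff_exists_fin]
  constructor
  · rintro ⟨k, F, hP, hmono, h0, hlast, hcov, htr⟩
    exact ⟨k, fun i => ⟨F i, hP i⟩, Subtype.ext h0, Subtype.ext hlast, fun i =>
      ⟨⟨hmono Fin.castSucc_lt_succ, fun G h₁ h₂ => hcov i G.1 G.2 ⟨h₁, h₂⟩⟩,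
        fun a ha b hb => htr a b i ha hb⟩⟩
  · rintro ⟨k, F, h0, hlast, hstep⟩
    exact ⟨k, fun i => (F i).1, fun i => (F i).2,
      Fin.strictMono_iff_lt_succ.2 fun i => (hstep i).1.lt, congrArg Subtype.val h0,
      congrArg Subtype.val hlast, fun i G hG h => (hstep i).1.2 (c := ⟨G, hG⟩) h.1 h.2,
      fun a b i ha hb => (hstep i).2 ha hb⟩

lemma exists_card_filter_notMem_eq_one_of_reflTransGen {A B : {F // P F}}
    (h : ReflTransGen (TransversalCovBy x) A B) {S : Finset ι} (hSB : ∀ a ∈ S, x a ∈ B.1)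
    (hSA : ∃ a ∈ S, x a ∉ A.1) : ∃ G : {F // P F}, #{a ∈ S | x a ∉ G.1} = 1 := by
  induction h with
  | refl =>
    obtain ⟨a, haS, haA⟩ := hSA
    exact absurd (hSB a haS) haA
  | @tail C B _ hCB ih =>
    by_cases hSC : ∀ a ∈ S, x a ∈ C.1
    · exact ih hSC
    push Not at hSC
    obtain ⟨a, haS, haC⟩ := hSC
    refine ⟨C, le_antisymm (card_le_one.2 fun b hb c hc => ?_)
      (card_pos.2 ⟨a, mem_filter.2 ⟨haS, haC⟩⟩)⟩
    obtain ⟨hbS, hbC⟩ := mem_filter.1 hb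
    obtain ⟨hcS, hcC⟩ := mem_filter.1 hc
    exact hCB.2 ⟨hSB b hbS, hbC⟩ ⟨hSB c hcS, hcC⟩

variable [Finite E]

lemma reflTransGen_transversalCovBy_of_subsingleton {A B : {F // P F}} (hAB : A ≤ B)
    (hx : (x ⁻¹' (B.1 \ A.1)).Subsingleton) : ReflTransGen (TransversalCovBy x) A B := by
  have := Fintype.ofFinite {F // P F}
  let := Fintype.toLocallyFiniteOrder (α := {F // P F})
  induction le_iff_reflTransGen_covBy.1 hAB using ReflTransGen.head_induction_on with
  | refl => rfl
  | head hAC hCB ih =>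
    have hCB' := le_iff_reflTransGen_covBy.2 hCB
    exact .head ⟨hAC, hx.anti (Set.preimage_mono (Set.sdiff_subset_sdiff_left hCB'))⟩
      (ih hCB' (hx.anti (Set.preimage_mono (Set.sdiff_subset_sdiff_right hAC.le))))

lemma reflTransGen_transversalCovBy_of_forall_exists [Fintype ι]
    (hinter : ∀ F G, P F → P G → P (F ∩ G)) (hempty : P ∅)
    (hsep : ∀ S : Finset ι, S.Nonempty → ∃ G : {F // P F}, #{a ∈ S | x a ∉ G.1} = 1)
    (B : {F // P F}) : ReflTransGen (TransversalCovBy x) ⟨∅, hempty⟩ B := by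
  refine WellFoundedLT.induction B fun B ih => ?_
  rcases ({a | x a ∈ B.1} : Finset ι).eq_empty_or_nonempty with hS | hS
  · refine reflTransGen_transversalCovBy_of_subsingleton x (Set.empty_subset _) ?_
    intro a ha
    simpa [hS] using (filter_eq_empty_iff.1 hS) (mem_univ a) ha.1
  obtain ⟨G, hG⟩ := hsep _ hS
  obtain ⟨a₀, ha₀⟩ := card_eq_one.1 hG
  have hout : ∀ a, x a ∈ B.1 → x a ∉ G.1 → a = a₀ := fun a haB haG =>
    mem_singleton.1 (ha₀ ▸ by simp [haB, haG])
  have ha₀BG : x a₀ ∈ B.1 ∧ x a₀ ∉ G.1 := by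
    simpa using ha₀.ge (mem_singleton_self a₀)
  let B' : {F // P F} := ⟨B.1 ∩ G.1, hinter _ _ B.2 G.2⟩
  have hB'B : B' < B :=
    lt_of_le_not_ge Set.inter_subset_left fun h => ha₀BG.2 (h ha₀BG.1).2
  refine (ih B' hB'B).trans (reflTransGen_transversalCovBy_of_subsingleton x hB'B.le ?_)
  exact Set.subsingleton_singleton.anti fun a ⟨haB, haB'⟩ =>
    hout a haB fun haG => haB' ⟨haB, haG⟩

end IntersectionClosed

theorem transversal_iff_rows_indep_general {E : Type*} [Fintype E] (M : PaperMatroid E)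
    (hs : M.Simple) {t : ℕ} (x : Fin t → E) :
    (∃ (k : ℕ) (F : Fin (k + 1) → Set E),
      (∀ i, M.Flat (F i)) ∧ StrictMono F ∧ F 0 = ∅ ∧ F (Fin.last k) = Set.univ ∧
      (∀ i : Fin k, ∀ G : Set E, M.Flat G →
        ¬ (F i.castSucc ⊂ G ∧ G ⊂ F i.succ)) ∧
      (∀ a b : Fin t, ∀ i : Fin k,
      x a ∈ F i.succ \ F i.castSucc → x b ∈ F i.succ \ F i.castSucc → a = b)) ↔
    SBIndep (fun a (G : M.Flats) => if x a ∈ G.1 then SB.zero else SB.one) := by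
  rw [exists_transversal_chain_iff_reflTransGen x (M.flat_empty hs) M.flat_univ,
    sbIndep_ite_iff]
  refine ⟨fun h S ⟨a, ha⟩ => ?_, fun h => ?_⟩
  · exact exists_card_filter_notMem_eq_one_of_reflTransGen x h (fun _ _ => trivial)
      ⟨a, ha, id⟩
  · exact reflTransGen_transversalCovBy_of_forall_exists x (fun _ _ => .inter) _ h _

/-- A subset of the ground set of a simple matroid is a partial transversal of the
partition arising from some maximal chain of flats iff the corresponding atoms index
independent rows of the complemented structure matrix of the lattice of flats. -/
theorem transversal_iff_rows_indep {E : Type*} [Fintype E] (M : PaperMatroid E)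
    (hs : M.Simple) {t : ℕ} (x : Fin t → E) (hx : Function.Injective x) :
    (∃ (k : ℕ) (F : Fin (k + 1) → Set E),
      (∀ i, M.Flat (F i)) ∧ StrictMono F ∧ F 0 = ∅ ∧ F (Fin.last k) = Set.univ ∧
      (∀ i : Fin k, ∀ G : Set E, M.Flat G →
        ¬ (F i.castSucc ⊂ G ∧ G ⊂ F i.succ)) ∧
      (∀ a b : Fin t, ∀ i : Fin k,
      x a ∈ F i.succ \ F i.castSucc → x b ∈ F i.succ \ F i.castSucc → a = b)) ↔
    SBIndep (fun a (G : M.Flats) => if x a ∈ G.1 then SB.zero else SB.one) :=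
  transversal_iff_rows_indep_general M hs x
end

section
/- Every matroid has a boolean representation: for every matroid M = (E, H) there exists a boolean (0-1) matrix A with columns indexed by E such that a subset X ⊆ E is independent in M if and only if the corresponding columns of A are independent over the superboolean semiring. -/
open scoped Classical

section SBAux

instance : DecidablePred SB.IsGhost :=
  fun a => inferInstanceAs (Decidable (a = SB.zero ∨ a = SB.nu))

lemma SB.val_zero' : (0 : SB).val = 0 := rfl

lemma SB.val_add' (a b : SB) : (a + b).val = min (a.val + b.val) 2 := rfl

lemma SB.ghost_iff (a : SB) : SB.IsGhost a ↔ a.val ≠ 1 := by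
  revert a; decide

lemma SB.val_sum_s17 {κ : Type*} (s : Finset κ) (f : κ → SB) :
    (∑ k ∈ s, f k).val = min (∑ k ∈ s, (f k).val) 2 := by
  classical
  induction s using Finset.cons_induction with
  | empty => simp [SB.val_zero']
  | cons a s ha ih =>
    rw [Finset.sum_cons, Finset.sum_cons, SB.val_add', ih]
    omega

lemma SB.ghost_sum_iff {κ : Type*} [Fintype κ] (f : κ → SB) :
    SB.IsGhost (∑ k, f k) ↔ (∑ k, (f k).val) ≠ 1 := by
  rw [SB.ghost_iff, SB.val_sum_s17]
  omega

lemma SB.boolval (a b : SB) (ha : a = SB.zero ∨ a = SB.one) (hb : b = SB.zero ∨ b = SB.one) :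
    (a * b).val = (if a = SB.one ∧ b = SB.one then 1 else 0) := by
  rcases ha with rfl | rfl <;> rcases hb with rfl | rfl <;> decide

end SBAux

/-- Every matroid has a boolean representation. -/
theorem matroid_boolean_representable {E : Type*} [Fintype E] (M : PaperMatroid E) :
    ∃ (m : ℕ) (A : Matrix (Fin m) E SB), IsBooleanMat A ∧
      ∀ X : Finset E,
        (M.Indep ↑X ↔ SBIndep (fun (a : {y // y ∈ X}) (i : Fin m) => A i a)) := by
  classical
  -- Build the corresponding mathlib matroid on ground set `univ`.
  have hempty : M.Indep (∅ : Set E) := by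
    obtain ⟨X, hX⟩ := M.exists_indep
    exact M.indep_subset (Set.empty_subset X) hX
  have haug : ∀ ⦃I J : Set E⦄, M.Indep I → M.Indep J → I.ncard < J.ncard →
      ∃ e ∈ J, e ∉ I ∧ M.Indep (insert e I) := by
    intro I J hI hJ hlt
    obtain ⟨J', hJ'sub, hJ'card⟩ :=
      Set.exists_subset_card_eq (s := J) (n := I.ncard + 1) (by omega)
    obtain ⟨y, hy, hins⟩ := M.exchange hI (M.indep_subset hJ'sub hJ) hJ'card
    exact ⟨y, hJ'sub hy.1, hy.2, hins⟩
  set M' : Matroid E :=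
    (IndepMatroid.ofFinite (E := (Set.univ : Set E)) Set.finite_univ M.Indep hempty
      (fun I J hJ hIJ => M.indep_subset hIJ hJ) haug
      (fun I _ => Set.subset_univ I)).matroid with hM'
  have hMind : ∀ Y : Set E, M'.Indep Y ↔ M.Indep Y := fun Y => Iff.rfl
  have hME : M'.E = Set.univ := rfl
  -- Row index: the closed sets of `M'`.
  let Fl := {F : Set E // M'.closure F = F}
  haveI : Fintype Fl := Fintype.ofFinite Fl
  let m := Fintype.card Fl
  let eqv : Fin m ≃ Fl := (Fintype.equivFin Fl).symm
  refine ⟨m, fun i x => if x ∈ (eqv i).1 then SB.zero else SB.one, ?_, ?_⟩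
  · intro i j
    dsimp only
    split <;> decide
  intro X
  set A : Matrix (Fin m) E SB := fun i x => if x ∈ (eqv i).1 then SB.zero else SB.one with hA
  set v : {y // y ∈ X} → Fin m → SB := fun a i => A i a with hv
  -- The counting lemma for rows.
  have hval : ∀ (α : {y // y ∈ X} → SB), (∀ k, α k = SB.zero ∨ α k = SB.one) →
      ∀ i : Fin m, (∑ k, (α k * v k i).val) =
        (Finset.univ.filter (fun k : {y // y ∈ X} =>
          α k = SB.one ∧ (↑k : E) ∉ (eqv i).1)).card := by
    intro α hα i
    rw [Finset.card_filter]
    refine Finset.sum_congr rfl (fun k _ => ?_)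
    have hvk : v k i = (if (↑k : E) ∈ (eqv i).1 then SB.zero else SB.one) := rfl
    by_cases hm : (↑k : E) ∈ (eqv i).1
    · rw [SB.boolval _ _ (hα k) (by rw [hvk]; simp [hm])]
      simp [hvk, hm]
      rcases hα k with h | h <;> simp [h] <;> decide
    · rw [SB.boolval _ _ (hα k) (by rw [hvk]; simp [hm])]
      simp [hvk, hm]
  constructor
  · -- independent ⇒ SBIndep
    intro hXind
    rintro ⟨α, hα, ⟨k₀, hk₀⟩, hg⟩
    have hk₀1 : α k₀ = SB.one := (hα k₀).resolve_left hk₀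
    have hF : M'.closure (M'.closure ((↑X : Set E) \ {(↑k₀ : E)})) =
        M'.closure ((↑X : Set E) \ {(↑k₀ : E)}) := M'.closure_closure _
    set F : Set E := M'.closure ((↑X : Set E) \ {(↑k₀ : E)}) with hFdef
    let i : Fin m := eqv.symm ⟨F, hF⟩
    have hiF : (eqv i).1 = F := by simp [i]
    have hk₀F : (↑k₀ : E) ∉ F := by
      have hXind' : M'.Indep (↑X : Set E) := (hMind _).mpr hXind
      exact hXind'.notMem_closure_diff_of_mem (by simp [k₀.2])
    have hsub : (↑X : Set E) \ {(↑k₀ : E)} ⊆ F := M'.subset_closure _ (by simp [hME])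
    have hgi := (SB.ghost_sum_iff _).mp (hg i)
    rw [hval α hα i] at hgi
    apply hgi
    rw [show (Finset.univ.filter (fun k : {y // y ∈ X} =>
        α k = SB.one ∧ (↑k : E) ∉ (eqv i).1)) = {k₀} from ?_]
    · simp
    ext k
    simp only [Finset.mem_filter, Finset.mem_univ, true_and, Finset.mem_singleton, hiF]
    constructor
    · rintro ⟨-, hkF⟩
      by_contra hne
      exact hkF (hsub ⟨k.2, fun h => hne (Subtype.ext h)⟩)
    · rintro rfl
      exact ⟨hk₀1, hk₀F⟩
  · -- SBIndep ⇒ independent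
    intro hind
    by_contra hXdep
    -- find a minimal dependent subset C of X
    obtain ⟨C, hCmem, hCmin⟩ := Finset.exists_min_image
      (Finset.filter (fun C : Finset E => ¬ M.Indep (↑C : Set E)) X.powerset)
      (fun C : Finset E => C.card) ⟨X, by simpa using hXdep⟩
    rw [Finset.mem_filter, Finset.mem_powerset] at hCmem
    obtain ⟨hCsub, hCdep⟩ := hCmem
    have hproper : ∀ x ∈ C, M.Indep (↑(C.erase x) : Set E) := by
      intro x hx
      by_contra hD
      have hmem : C.erase x ∈
          Finset.filter (fun C : Finset E => ¬ M.Indep (↑C : Set E)) X.powerset := by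
        rw [Finset.mem_filter, Finset.mem_powerset]
        exact ⟨(Finset.erase_subset _ _).trans hCsub, hD⟩
      have := hCmin _ hmem
      have hlt : (C.erase x).card < C.card := Finset.card_erase_lt_of_mem hx
      omega
    have hCne : C.Nonempty := by
      rcases Finset.eq_empty_or_nonempty C with rfl | h
      · exact absurd (by simpa using hempty) hCdep
      · exact h
    apply hind
    refine ⟨fun k => if (↑k : E) ∈ C then SB.one else SB.zero, fun k => ?_, ?_, ?_⟩
    · dsimp only; split
      · exact Or.inr rfl
      · exact Or.inl rfl
    · obtain ⟨x, hx⟩ := hCne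
      refine ⟨⟨x, hCsub hx⟩, ?_⟩
      simp only [hx, if_true]
      decide
    · intro i
      set α : {y // y ∈ X} → SB := fun k => if (↑k : E) ∈ C then SB.one else SB.zero with hαdef
      have hα : ∀ k, α k = SB.zero ∨ α k = SB.one := by
        intro k
        by_cases h : (↑k : E) ∈ C
        · exact Or.inr (by simp [hαdef, h])
        · exact Or.inl (by simp [hαdef, h])
      rw [SB.ghost_sum_iff, hval α hα i]
      set F : Set E := (eqv i).1 with hFdef
      have hF : M'.closure F = F := (eqv i).2
      intro hcard
      obtain ⟨k₁, hk₁⟩ := Finset.card_eq_one.mp hcard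
      have hk₁mem : k₁ ∈ Finset.univ.filter (fun k : {y // y ∈ X} =>
          α k = SB.one ∧ (↑k : E) ∉ F) := hk₁ ▸ Finset.mem_singleton_self k₁
      rw [Finset.mem_filter] at hk₁mem
      obtain ⟨-, hk₁1, hk₁F⟩ := hk₁mem
      have hk₁C : (↑k₁ : E) ∈ C := by
        by_contra h
        simp only [hαdef, h, if_false] at hk₁1
        exact absurd hk₁1 (by decide)
      -- all other elements of C lie in F
      have hDF : (↑(C.erase (↑k₁ : E)) : Set E) ⊆ F := by
        intro y hy
        simp only [Finset.coe_erase, Set.mem_diff, Set.mem_singleton_iff] at hy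
        obtain ⟨hyC, hyne⟩ := hy
        have hyC' : y ∈ C := Finset.mem_coe.mp hyC
        by_contra hyF
        have : (⟨y, hCsub hyC⟩ : {y // y ∈ X}) ∈ Finset.univ.filter
            (fun k : {y // y ∈ X} => α k = SB.one ∧ (↑k : E) ∉ F) := by
          rw [Finset.mem_filter]
          exact ⟨Finset.mem_univ _, by simp [hαdef, hyC'], hyF⟩
        rw [hk₁, Finset.mem_singleton] at this
        exact hyne (by simpa using congrArg Subtype.val this)
      have hDind : M'.Indep (↑(C.erase (↑k₁ : E)) : Set E) :=
        (hMind _).mpr (hproper _ hk₁C)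
      have hCins : (↑C : Set E) = insert (↑k₁ : E) (↑(C.erase (↑k₁ : E)) : Set E) := by
        rw [← Finset.coe_insert, Finset.insert_erase hk₁C]
      have hdep : M'.Dep (insert (↑k₁ : E) (↑(C.erase (↑k₁ : E)) : Set E)) := by
        rw [Matroid.dep_iff]
        refine ⟨fun h => hCdep ((hMind _).mp (hCins ▸ h)), by rw [hME]; exact Set.subset_univ _⟩
      have hmemcl : (↑k₁ : E) ∈ M'.closure (↑(C.erase (↑k₁ : E)) : Set E) :=
        (hDind.insert_dep_iff.mp hdep).1
      have : (↑k₁ : E) ∈ F := by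
        have := M'.closure_subset_closure hDF hmemcl
        rwa [hF] at this
      exact hk₁F this
end
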